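/- arXiv:1210.2451 — 2 statements merged into one kernel-verified Lean document; each statement's English description precedes it below -/
import Mathlib

section
/- Let G be the least function from pairs of subsets of S₁ × S₂ to subsets of S₁ × S₂, monotone in each argument, satisfying G X Y = (X ∩ Y) ∪ ⋃_{a ∈ Act} G (⟨a⟩₁X) ([a]₂Y) for all X, Y ⊆ S₁ × S₂. Then for all P ∈ S₁ and Q ∈ S₂: (P,Q) ∈ G {(p,q) | I(p) = ∅} {(p,q) | I(q) ≠ ∅} if and only if there exists a completed trace t ∈ CT(P) with t ∉ CT(Q). -/
/-- The diamond modality in the first component: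
`⟨a⟩₁X = {(p,q) | ∃ p', p →₁^a p' ∧ (p',q) ∈ X}`. -/
def dia1 {S₁ S₂ Act : Type*} (tr1 : S₁ → Act → S₁ → Prop) (a : Act)
    (X : Set (S₁ × S₂)) : Set (S₁ × S₂) :=
  {pq | ∃ p', tr1 pq.1 a p' ∧ (p', pq.2) ∈ X}

/-- The box modality in the second component:
`[a]₂Y = {(p,q) | ∀ q', q →₂^a q' → (p,q') ∈ Y}`. -/
def box2 {S₁ S₂ Act : Type*} (tr2 : S₂ → Act → S₂ → Prop) (a : Act)
    (Y : Set (S₁ × S₂)) : Set (S₁ × S₂) :=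
  {pq | ∀ q', tr2 pq.2 a q' → (pq.1, q') ∈ Y}

/-- `P →^t Q` : the process `Q` is reachable from `P` via the word `t`. -/
def Traces {S Act : Type*} (tr : S → Act → S → Prop) : S → List Act → S → Prop
  | p, [], q => p = q
  | p, a :: t, q => ∃ p', tr p a p' ∧ Traces tr p' t q

/-- `I(P)` : the set of initial actions of `P`. -/
def initials {S Act : Type*} (tr : S → Act → S → Prop) (P : S) : Set Act :=
  {a | ∃ Q, tr P a Q}

/-- `CT(P)` : the set of completed traces of `P`. -/
def ctraceSet {S Act : Type*} (tr : S → Act → S → Prop) (P : S) : Set (List Act) :=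
  {t | ∃ Q, Traces tr P t Q ∧ initials tr Q = ∅}


section Aux
variable {S₁ S₂ Act : Type*} (tr1 : S₁ → Act → S₁ → Prop) (tr2 : S₂ → Act → S₂ → Prop)

def diaL : List Act → Set (S₁ × S₂) → Set (S₁ × S₂)
  | [], X => X
  | a :: t, X => dia1 tr1 a (diaL t X)

def boxL : List Act → Set (S₁ × S₂) → Set (S₁ × S₂)
  | [], Y => Y
  | a :: t, Y => box2 tr2 a (boxL t Y)

lemma diaL_append (t : List Act) (a : Act) (X : Set (S₁ × S₂)) :
    diaL tr1 (t ++ [a]) X = diaL tr1 t (dia1 tr1 a X) := by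
  induction t with
  | nil => rfl
  | cons b t ih => simp [diaL, ih]

lemma boxL_append (t : List Act) (a : Act) (Y : Set (S₁ × S₂)) :
    boxL tr2 (t ++ [a]) Y = boxL tr2 t (box2 tr2 a Y) := by
  induction t with
  | nil => rfl
  | cons b t ih => simp [boxL, ih]

lemma mem_diaL (t : List Act) (X : Set (S₁ × S₂)) (p : S₁) (q : S₂) :
    (p, q) ∈ diaL tr1 t X ↔ ∃ p', Traces tr1 p t p' ∧ (p', q) ∈ X := by
  induction t generalizing p with
  | nil => simp [diaL, Traces]
  | cons a t ih =>
    constructor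
    · rintro ⟨p', hstep, hmem⟩
      obtain ⟨p'', ht, hx⟩ := (ih p').1 hmem
      exact ⟨p'', ⟨p', hstep, ht⟩, hx⟩
    · rintro ⟨p'', ⟨p', hstep, ht⟩, hx⟩
      exact ⟨p', hstep, (ih p').2 ⟨p'', ht, hx⟩⟩

lemma mem_boxL (t : List Act) (Y : Set (S₁ × S₂)) (p : S₁) (q : S₂) :
    (p, q) ∈ boxL tr2 t Y ↔ ∀ q', Traces tr2 q t q' → (p, q') ∈ Y := by
  induction t generalizing q with
  | nil =>
    simp only [boxL, Traces]
    constructor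
    · rintro h q' rfl; exact h
    · intro h; exact h q rfl
  | cons a t ih =>
    constructor
    · rintro h q'' ⟨q', hstep, ht⟩
      exact (ih q').1 (h q' hstep) q'' ht
    · intro h q' hstep
      exact (ih q').2 fun q'' ht => h q'' ⟨q', hstep, ht⟩

lemma diaL_mono (t : List Act) {X X' : Set (S₁ × S₂)} (h : X ⊆ X') :
    diaL tr1 t X ⊆ diaL tr1 t X' := by
  induction t with
  | nil => exact h
  | cons a t ih => rintro ⟨p, q⟩ ⟨p', hs, hm⟩; exact ⟨p', hs, ih hm⟩

lemma boxL_mono (t : List Act) {Y Y' : Set (S₁ × S₂)} (h : Y ⊆ Y') :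
    boxL tr2 t Y ⊆ boxL tr2 t Y' := by
  induction t with
  | nil => exact h
  | cons a t ih => intro pq hm q' hs; exact ih (hm q' hs)

end Aux

/-- if `G` is the least function, monotone in each argument, satisfying
`G X Y = (X ∩ Y) ∪ ⋃_{a ∈ Act} G (⟨a⟩₁X) ([a]₂Y)`, then
`(P,Q) ∈ G {(p,q) | I(p) = ∅} {(p,q) | I(q) ≠ ∅}` iff there is a completed trace
`t ∈ CT(P)` with `t ∉ CT(Q)`. -/
theorem stmt_2 {S₁ S₂ Act : Type*} [Fintype Act]
    (tr1 : S₁ → Act → S₁ → Prop) (tr2 : S₂ → Act → S₂ → Prop)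
    (G : Set (S₁ × S₂) → Set (S₁ × S₂) → Set (S₁ × S₂))
    (hmono : ∀ X X' Y Y', X ⊆ X' → Y ⊆ Y' → G X Y ⊆ G X' Y')
    (heq : ∀ X Y, G X Y = (X ∩ Y) ∪ ⋃ a : Act, G (dia1 tr1 a X) (box2 tr2 a Y))
    (hleast : ∀ G' : Set (S₁ × S₂) → Set (S₁ × S₂) → Set (S₁ × S₂),
      (∀ X X' Y Y', X ⊆ X' → Y ⊆ Y' → G' X Y ⊆ G' X' Y') →
      (∀ X Y, G' X Y = (X ∩ Y) ∪ ⋃ a : Act, G' (dia1 tr1 a X) (box2 tr2 a Y)) →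
      ∀ X Y, G X Y ⊆ G' X Y) :
    ∀ (P : S₁) (Q : S₂),
      (P, Q) ∈ G {pq : S₁ × S₂ | initials tr1 pq.1 = ∅}
                 {pq : S₁ × S₂ | initials tr2 pq.2 ≠ ∅} ↔
        ∃ t, t ∈ ctraceSet tr1 P ∧ t ∉ ctraceSet tr2 Q := by
  intro P Q
  set X₀ : Set (S₁ × S₂) := {pq : S₁ × S₂ | initials tr1 pq.1 = ∅}
  set Y₀ : Set (S₁ × S₂) := {pq : S₁ × S₂ | initials tr2 pq.2 ≠ ∅}
  constructor
  · intro hmem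
    set G' : Set (S₁ × S₂) → Set (S₁ × S₂) → Set (S₁ × S₂) :=
      fun X Y => {pq | ∃ t : List Act, pq ∈ diaL tr1 t X ∧ pq ∈ boxL tr2 t Y} with hG'
    have hmono' : ∀ X X' Y Y', X ⊆ X' → Y ⊆ Y' → G' X Y ⊆ G' X' Y' := by
      intro X X' Y Y' hX hY pq ⟨t, h1, h2⟩
      exact ⟨t, diaL_mono tr1 t hX h1, boxL_mono tr2 t hY h2⟩
    have heq' : ∀ X Y, G' X Y = (X ∩ Y) ∪ ⋃ a : Act, G' (dia1 tr1 a X) (box2 tr2 a Y) := by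
      intro X Y
      ext pq
      simp only [hG', Set.mem_setOf_eq, Set.mem_union, Set.mem_inter_iff, Set.mem_iUnion]
      constructor
      · rintro ⟨t, h1, h2⟩
        rcases List.eq_nil_or_concat t with rfl | ⟨t', a, rfl⟩
        · exact Or.inl ⟨h1, h2⟩
        · refine Or.inr ⟨a, t', ?_, ?_⟩
          · rwa [List.concat_eq_append, diaL_append] at h1
          · rwa [List.concat_eq_append, boxL_append] at h2
      · rintro (⟨h1, h2⟩ | ⟨a, t', h1, h2⟩)
        · exact ⟨[], h1, h2⟩
        · exact ⟨t' ++ [a], by rwa [diaL_append], by rwa [boxL_append]⟩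
    have hsub := hleast G' hmono' heq' X₀ Y₀ hmem
    obtain ⟨t, h1, h2⟩ := hsub
    obtain ⟨P', hT, hI⟩ := (mem_diaL tr1 t X₀ P Q).1 h1
    have hB := (mem_boxL tr2 t Y₀ P Q).1 h2
    refine ⟨t, ⟨P', hT, hI⟩, ?_⟩
    rintro ⟨Q', hTQ, hIQ⟩
    exact hB Q' hTQ hIQ
  · rintro ⟨t, ⟨P', hT, hI⟩, hnot⟩
    have key : ∀ (t : List Act) (X Y : Set (S₁ × S₂)),
        diaL tr1 t X ∩ boxL tr2 t Y ⊆ G X Y := by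
      intro t
      induction t using List.reverseRecOn with
      | nil =>
        intro X Y pq hpq
        rw [heq X Y]
        exact Or.inl hpq
      | append_singleton t' a ih =>
        intro X Y pq hpq
        rw [diaL_append, boxL_append] at hpq
        rw [heq X Y]
        exact Or.inr (Set.mem_iUnion.2 ⟨a, ih _ _ hpq⟩)
    apply key t X₀ Y₀
    constructor
    · exact (mem_diaL tr1 t X₀ P Q).2 ⟨P', hT, hI⟩
    · refine (mem_boxL tr2 t Y₀ P Q).2 fun Q' hTQ hIQ => ?_
      exact hnot ⟨Q', hTQ, hIQ⟩
end

section
/- Let G be the least function from pairs of subsets of S₁ × S₂ to subsets of S₁ × S₂, monotone in each argument, satisfying G X Y = (X ∩ Y) ∪ ⋃_{a ∈ Act} G (⟨a⟩₁X) ([a]₂Y) for all X, Y ⊆ S₁ × S₂. Then for all P ∈ S₁ and Q ∈ S₂: (P,Q) ∈ ⋃_{A ⊆ Act} G {(p,q) | I(p) = A} {(p,q) | I(q) ≠ A} if and only if there exists a ready pair ⟨t,A⟩ ∈ R(P) with ⟨t,A⟩ ∉ R(Q). -/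
/-- `R(P)` : the set of ready pairs `⟨t,A⟩` of `P`. -/
def readyPairs {S Act : Type*} (tr : S → Act → S → Prop) (P : S) :
    Set (List Act × Set Act) :=
  {tA | ∃ Q, Traces tr P tA.1 Q ∧ initials tr Q = tA.2}

private lemma traces_append {S Act : Type*} (tr : S → Act → S → Prop)
    (s u : List Act) (p r : S) :
    Traces tr p (s ++ u) r ↔ ∃ m, Traces tr p s m ∧ Traces tr m u r := by
  induction s generalizing p with
  | nil => simp [Traces]
  | cons a s ih =>
    simp only [List.cons_append, Traces]
    constructor
    · rintro ⟨p₁, ha, h⟩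
      obtain ⟨m, hm, hu⟩ := (ih p₁).mp h
      exact ⟨m, ⟨p₁, ha, hm⟩, hu⟩
    · rintro ⟨m, ⟨p₁, ha, hm⟩, hu⟩
      exact ⟨p₁, ha, (ih p₁).mpr ⟨m, hm, hu⟩⟩

/-- The explicit "ready-pair distinguishing" function. -/
private def Gnat {S₁ S₂ Act : Type*} (tr1 : S₁ → Act → S₁ → Prop)
    (tr2 : S₂ → Act → S₂ → Prop) (X Y : Set (S₁ × S₂)) : Set (S₁ × S₂) :=
  {pq | ∃ t : List Act, (∃ p', Traces tr1 pq.1 t p' ∧ (p', pq.2) ∈ X) ∧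
    (∀ q', Traces tr2 pq.2 t q' → (pq.1, q') ∈ Y)}

private lemma gnat_mono {S₁ S₂ Act : Type*} (tr1 : S₁ → Act → S₁ → Prop)
    (tr2 : S₂ → Act → S₂ → Prop) :
    ∀ X X' Y Y' : Set (S₁ × S₂), X ⊆ X' → Y ⊆ Y' →
      Gnat tr1 tr2 X Y ⊆ Gnat tr1 tr2 X' Y' := by
  rintro X X' Y Y' hX hY ⟨p, q⟩ ⟨t, ⟨p', hp, hpX⟩, hbox⟩
  exact ⟨t, ⟨p', hp, hX hpX⟩, fun q' hq' => hY (hbox q' hq')⟩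

private lemma gnat_eq {S₁ S₂ Act : Type*} (tr1 : S₁ → Act → S₁ → Prop)
    (tr2 : S₂ → Act → S₂ → Prop) :
    ∀ X Y : Set (S₁ × S₂), Gnat tr1 tr2 X Y =
      (X ∩ Y) ∪ ⋃ a : Act, Gnat tr1 tr2 (dia1 tr1 a X) (box2 tr2 a Y) := by
  intro X Y
  ext ⟨p, q⟩
  constructor
  · rintro ⟨t, ⟨p', hp, hpX⟩, hbox⟩
    rcases t.eq_nil_or_concat with rfl | ⟨s, a, rfl⟩
    all_goals simp only [List.concat_eq_append] at hp hbox
    · left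
      cases hp
      exact ⟨hpX, hbox q rfl⟩
    · right
      refine Set.mem_iUnion.mpr ⟨a, s, ?_, ?_⟩
      · obtain ⟨m, hm, ha⟩ := (traces_append tr1 s [a] p p').mp hp
        obtain ⟨p'', ha', h⟩ := ha
        subst h
        exact ⟨m, hm, p'', ha', hpX⟩
      · intro q₁ hq₁ q₂ ha2
        exact hbox q₂ ((traces_append tr2 s [a] q q₂).mpr ⟨q₁, hq₁, q₂, ha2, rfl⟩)
  · rintro (⟨hX, hY⟩ | h)
    · exact ⟨[], ⟨p, rfl, hX⟩, fun q' hq' => by cases hq'; exact hY⟩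
    · obtain ⟨a, t, ⟨p', hp, p'', ha, hpX⟩, hbox⟩ := Set.mem_iUnion.mp h
      refine ⟨t ++ [a], ⟨p'', (traces_append tr1 t [a] p p'').mpr
        ⟨p', hp, p'', ha, rfl⟩, hpX⟩, ?_⟩
      intro q' hq'
      obtain ⟨m, hm, q'', ha', rfl⟩ := (traces_append tr2 t [a] q q').mp hq'
      exact hbox m hm q'' ha'

/-- if `G` is the least function, monotone in each argument, satisfying
`G X Y = (X ∩ Y) ∪ ⋃_{a ∈ Act} G (⟨a⟩₁X) ([a]₂Y)`, then
`(P,Q) ∈ ⋃_{A ⊆ Act} G {(p,q) | I(p) = A} {(p,q) | I(q) ≠ A}` iff there is a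
ready pair `⟨t,A⟩ ∈ R(P)` with `⟨t,A⟩ ∉ R(Q)`. -/
theorem stmt_4 {S₁ S₂ Act : Type*} [Fintype Act]
    (tr1 : S₁ → Act → S₁ → Prop) (tr2 : S₂ → Act → S₂ → Prop)
    (G : Set (S₁ × S₂) → Set (S₁ × S₂) → Set (S₁ × S₂))
    (hmono : ∀ X X' Y Y', X ⊆ X' → Y ⊆ Y' → G X Y ⊆ G X' Y')
    (heq : ∀ X Y, G X Y = (X ∩ Y) ∪ ⋃ a : Act, G (dia1 tr1 a X) (box2 tr2 a Y))
    (hleast : ∀ G' : Set (S₁ × S₂) → Set (S₁ × S₂) → Set (S₁ × S₂),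
      (∀ X X' Y Y', X ⊆ X' → Y ⊆ Y' → G' X Y ⊆ G' X' Y') →
      (∀ X Y, G' X Y = (X ∩ Y) ∪ ⋃ a : Act, G' (dia1 tr1 a X) (box2 tr2 a Y)) →
      ∀ X Y, G X Y ⊆ G' X Y) :
    ∀ (P : S₁) (Q : S₂),
      (P, Q) ∈ ⋃ A : Set Act, G {pq : S₁ × S₂ | initials tr1 pq.1 = A}
                                {pq : S₁ × S₂ | initials tr2 pq.2 ≠ A} ↔
        ∃ tA, tA ∈ readyPairs tr1 P ∧ tA ∉ readyPairs tr2 Q := by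
  intro P Q
  have hsub := hleast (Gnat tr1 tr2) (gnat_mono tr1 tr2) (gnat_eq tr1 tr2)
  have key : ∀ (t : List Act) (X Y : Set (S₁ × S₂)) (p : S₁) (q : S₂),
      (∃ p', Traces tr1 p t p' ∧ (p', q) ∈ X) →
      (∀ q', Traces tr2 q t q' → (p, q') ∈ Y) → (p, q) ∈ G X Y := by
    intro t
    induction t using List.reverseRecOn with
    | nil =>
      rintro X Y p q ⟨p', hp, hX⟩ hY
      cases hp
      rw [heq]
      exact Or.inl ⟨hX, hY _ rfl⟩
    | append_singleton s a ih =>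
      rintro X Y p q ⟨p', hp, hX⟩ hY
      rw [heq]
      refine Or.inr (Set.mem_iUnion.mpr ⟨a, ?_⟩)
      obtain ⟨m, hm, p'', ha, rfl⟩ := (traces_append tr1 s [a] p p').mp hp
      refine ih (dia1 tr1 a X) (box2 tr2 a Y) p q ⟨m, hm, p'', ha, hX⟩ ?_
      intro q₁ hq₁ q₂ ha2
      exact hY q₂ ((traces_append tr2 s [a] q q₂).mpr ⟨q₁, hq₁, q₂, ha2, rfl⟩)
  constructor
  · intro h
    obtain ⟨A, hA⟩ := Set.mem_iUnion.mp h
    obtain ⟨t, ⟨p', hp, hpA⟩, hbox⟩ := hsub _ _ hA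
    refine ⟨(t, A), ⟨p', hp, hpA⟩, ?_⟩
    rintro ⟨Q', hQ', hI⟩
    exact hbox Q' hQ' hI
  · rintro ⟨⟨t, A⟩, ⟨P', hP', hA⟩, hnot⟩
    refine Set.mem_iUnion.mpr ⟨A, ?_⟩
    refine key t _ _ P Q ⟨P', hP', hA⟩ ?_
    intro q' hq' hc
    exact hnot ⟨q', hq', hc⟩
end
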